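/- arXiv:1512.09339 — 2 statements merged into one kernel-verified Lean document; each statement's English description precedes it below -/
import Mathlib

section
/- If a structural matrix algebra M(B,k) is a Frobenius algebra, then it is semisimple. -/
/-- The structural matrix algebra `M(B, k)` associated to a reflexive transitive relation `B`
on `{1, …, n}`: the subalgebra of `Mₙ(k)` of matrices whose `(i,j)`-entry is zero
whenever `(i,j) ∉ B`. -/
def structuralMatrixAlgebra (k : Type*) [Field k] {n : ℕ} (B : Fin n → Fin n → Prop)
    (hrefl : ∀ i, B i i) (htrans : ∀ i j l, B i j → B j l → B i l) :
    Subalgebra k (Matrix (Fin n) (Fin n) k) where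
  carrier := {A | ∀ i j, ¬ B i j → A i j = 0}
  mul_mem' := by
    classical
    intro A C hA hC i j hij
    simp only [Set.mem_setOf_eq] at hA hC
    rw [Matrix.mul_apply]
    refine Finset.sum_eq_zero fun l _ => ?_
    by_cases h : B i l
    · rw [hC l j fun h' => hij (htrans i l j h h'), mul_zero]
    · rw [hA i l h, zero_mul]
  one_mem' := by
    intro i j hij
    have : i ≠ j := fun h => hij (h ▸ hrefl i)
    simp [Matrix.one_apply, this]
  add_mem' := by
    intro A C hA hC i j hij
    simp only [Set.mem_setOf_eq] at hA hC
    simp [Matrix.add_apply, hA i j hij, hC i j hij]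
  zero_mem' := by intro i j _; simp
  algebraMap_mem' := by
    intro c i j hij
    have : i ≠ j := fun h => hij (h ▸ hrefl i)
    simp [Matrix.algebraMap_matrix_apply, this]

/-- A finite dimensional `k`-algebra is Frobenius if there is a linear functional `l` whose
associated bilinear form `(a, b) ↦ l (a * b)` is nondegenerate. -/
def IsFrobeniusAlgebra (k A : Type*) [Field k] [Ring A] [Algebra k A] : Prop :=
  ∃ l : A →ₗ[k] k,
    (∀ a : A, (∀ b : A, l (a * b) = 0) → a = 0) ∧
    (∀ b : A, (∀ a : A, l (a * b) = 0) → b = 0)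

/-! If `B` is symmetric, `M(B, k)` is the sum of its column ideals `M(B, k) e_jj`, and each of
them is simple: a nonzero element with a nonzero entry in row `p` of column `j` generates `e_jj`
after left multiplication by `e_jp`, which lies in `M(B, k)` because `B j p`.

If `B` is not symmetric, choose `j` maximal among the targets of strict pairs `i < j`. Every
successor of `j` is then a predecessor of `j`, but not conversely, so
`dim M(B, k) e_jj = #{i | B i j} > #{q | B j q} = dim e_jj M(B, k)`. This cannot happen in a
Frobenius algebra, where `a ↦ λ (a * ·)` embeds `A e` into the dual of `e A` for every
idempotent `e`. -/

open Module Submodule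

theorem IsFrobeniusAlgebra.finrank_range_mulRight_le {k A : Type*} [Field k] [Ring A]
    [Algebra k A] [FiniteDimensional k A] (hA : IsFrobeniusAlgebra k A) {e : A}
    (he : IsIdempotentElem e) :
    finrank k (LinearMap.range (LinearMap.mulRight k e)) ≤
      finrank k (LinearMap.range (LinearMap.mulLeft k e)) := by
  obtain ⟨l, hl, -⟩ := hA
  set V := LinearMap.range (LinearMap.mulRight k e)
  set W := LinearMap.range (LinearMap.mulLeft k e)
  let pairing : V →ₗ[k] Dual k W := ((LinearMap.mul k A).compr₂ l).compl₁₂ V.subtype W.subtype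
  have hinj : Function.Injective pairing := by
    refine (injective_iff_map_eq_zero pairing).2 ?_
    rintro ⟨_, x, rfl⟩ hx
    refine Subtype.ext (hl _ fun b => ?_)
    -- `x * e * b = x * e * (e * b)` with `e * b ∈ W`
    have := LinearMap.congr_fun hx ⟨e * b, b, rfl⟩
    simpa [pairing, mul_assoc, ← mul_assoc e e b, he.eq] using this
  calc finrank k V ≤ finrank k (Dual k W) := LinearMap.finrank_le_finrank_of_injective hinj
    _ = finrank k W := Subspace.dual_finrank_eq

theorem Submodule.iSup_span_singleton_eq_top_of_sum_eq_one {R ι : Type*} [Ring R] [Fintype ι]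
    {e : ι → R} (he : ∑ i, e i = 1) : ⨆ i, R ∙ e i = ⊤ := by
  refine eq_top_iff.2 fun a _ => ?_
  rw [← mul_one a, ← he, Finset.mul_sum]
  exact sum_mem fun i _ => mem_iSup_of_mem i (mem_span_singleton.2 ⟨a, rfl⟩)

theorem isSimpleModule_span_singleton_of_mem_span {R M : Type*} [Ring R] [AddCommGroup M]
    [Module R M] {e : M} (he : e ≠ 0) (h : ∀ c ∈ R ∙ e, c ≠ 0 → e ∈ R ∙ c) :
    IsSimpleModule R (R ∙ e) := by
  rw [isSimpleModule_iff_isAtom]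
  refine ⟨by simpa using he, fun N hN => ?_⟩
  by_contra hN0
  obtain ⟨c, hcN, hc0⟩ := exists_mem_ne_zero_of_ne_bot hN0
  have : R ∙ e ≤ N := (span_singleton_le_iff_mem _ _).2 <|
    (span_singleton_le_iff_mem _ _).2 hcN (h c (hN.le hcN) hc0)
  exact hN.not_ge this

theorem isSemisimpleRing_of_sum_eq_one {R ι : Type*} [Ring R] [Fintype ι] {e : ι → R}
    (he : ∑ i, e i = 1) (hne : ∀ i, e i ≠ 0) (h : ∀ i, ∀ c ∈ R ∙ e i, c ≠ 0 → e i ∈ R ∙ c) :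
    IsSemisimpleRing R :=
  isSemisimpleModule_of_isSemisimpleModule_submodule'
    (fun i => have := isSimpleModule_span_singleton_of_mem_span (hne i) (h i); inferInstance)
    (iSup_span_singleton_eq_top_of_sum_eq_one he)

theorem exists_maximal_of_not_symmetric {α : Type*} [Finite α] {B : α → α → Prop}
    (htrans : ∀ i j l, B i j → B j l → B i l) (hns : ¬ ∀ i j, B i j → B j i) :
    ∃ j, (∃ i, B i j ∧ ¬ B j i) ∧ ∀ l, B j l → B l j := by
  let above : α → α → Prop := fun l j => B j l ∧ ¬ B l j
  have : IsTrans α above := ⟨fun a b c ⟨hba, hab⟩ ⟨hcb, hbc⟩ =>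
    ⟨htrans _ _ _ hcb hba, fun hac => hab (htrans _ _ _ hac hcb)⟩⟩
  have : Std.Irrefl above := ⟨fun a ⟨h, h'⟩ => h' h⟩
  push Not at hns
  obtain ⟨i, j, hij, hji⟩ := hns
  obtain ⟨m, ⟨i', hi'm⟩, hmin⟩ := (Finite.wellFounded_of_trans_of_irrefl above).has_min
    {j | ∃ i, above j i} ⟨j, i, hij, hji⟩
  exact ⟨m, ⟨i', hi'm⟩, fun l hml => by_contra fun hlm => hmin l ⟨m, hml, hlm⟩ ⟨hml, hlm⟩⟩

namespace structuralMatrixAlgebra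

variable {k : Type*} [Field k] {n : ℕ} {B : Fin n → Fin n → Prop}
  {hrefl : ∀ i, B i i} {htrans : ∀ i j l, B i j → B j l → B i l}

local notation "𝕄" => structuralMatrixAlgebra k B hrefl htrans

theorem single_mem {i j : Fin n} (h : B i j) (c : k) : Matrix.single i j c ∈ 𝕄 := by
  intro p q hpq
  rw [Matrix.single_apply, if_neg]
  rintro ⟨rfl, rfl⟩
  exact hpq h

def matrixUnit {i j : Fin n} (h : B i j) : 𝕄 := ⟨Matrix.single i j 1, single_mem h 1⟩

@[simp]
theorem coe_matrixUnit {i j : Fin n} (h : B i j) :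
    ((matrixUnit h : 𝕄) : Matrix (Fin n) (Fin n) k) = Matrix.single i j 1 := rfl

theorem matrixUnit_ne_zero {i j : Fin n} (h : B i j) : (matrixUnit h : 𝕄) ≠ 0 := fun h0 => by
  simpa using congrArg (fun a : 𝕄 => (a : Matrix (Fin n) (Fin n) k) i j) h0

theorem sum_matrixUnit_diag : ∑ j, (matrixUnit (hrefl j) : 𝕄) = 1 :=
  Subtype.ext <| by simp [Matrix.sum_single_one]

theorem isIdempotentElem_matrixUnit_diag (j : Fin n) :
    IsIdempotentElem (matrixUnit (hrefl j) : 𝕄) :=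
  Subtype.ext <| by simp

theorem matrixUnit_diag_mem_span_singleton (hsym : ∀ i j, B i j → B j i) {j : Fin n} {c : 𝕄}
    (hc : c ∈ 𝕄 ∙ matrixUnit (hrefl j)) (hc0 : c ≠ 0) :
    (matrixUnit (hrefl j) : 𝕄) ∈ 𝕄 ∙ c := by
  obtain ⟨x, rfl⟩ := mem_span_singleton.1 hc
  obtain ⟨p, hp⟩ : ∃ p, (x : Matrix (Fin n) (Fin n) k) p j ≠ 0 := by
    by_contra! hx
    refine hc0 (Subtype.ext (Matrix.ext fun p q => ?_))
    by_cases hq : q = j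
    · subst hq; simp [hx p]
    · simp [hq]
  have hpj : B p j := by_contra fun h => hp (x.2 p j h)
  refine mem_span_singleton.2 ⟨((x : Matrix (Fin n) (Fin n) k) p j)⁻¹ •
    matrixUnit (hsym p j hpj), Subtype.ext ?_⟩
  simp [← mul_assoc, inv_mul_cancel₀ hp]

theorem isSemisimpleRing_of_symmetric (hsym : ∀ i j, B i j → B j i) : IsSemisimpleRing 𝕄 :=
  isSemisimpleRing_of_sum_eq_one sum_matrixUnit_diag (fun _ => matrixUnit_ne_zero _)
    fun _ _ hc hc0 => matrixUnit_diag_mem_span_singleton hsym hc hc0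

open scoped Classical in
theorem card_le_finrank_range_mulRight (j : Fin n) :
    Fintype.card {i // B i j} ≤
      finrank k (LinearMap.range (LinearMap.mulRight k (matrixUnit (hrefl j) : 𝕄))) := by
  let u : {i // B i j} → 𝕄 := fun i => matrixUnit i.2
  have hu : LinearIndependent k u := by
    refine LinearIndependent.of_comp (𝕄).val.toLinearMap ?_
    have hcomp : (𝕄).val.toLinearMap ∘ u =
        Matrix.stdBasis k (Fin n) (Fin n) ∘ fun i : {i // B i j} => (i.1, j) :=
      funext fun i => by simp [u, Matrix.stdBasis_eq_single]
    rw [hcomp]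
    exact (Matrix.stdBasis k _ _).linearIndependent.comp _
      fun i i' h => Subtype.ext (congrArg Prod.fst h)
  rw [← finrank_span_eq_card hu]
  refine Submodule.finrank_mono (span_le.2 (Set.range_subset_iff.2 fun i => ⟨u i, ?_⟩))
  exact Subtype.ext (by simp [u])

open scoped Classical in
theorem finrank_range_mulLeft_le_card (j : Fin n) :
    finrank k (LinearMap.range (LinearMap.mulLeft k (matrixUnit (hrefl j) : 𝕄))) ≤
      Fintype.card {q // B j q} := by
  let w : {q // B j q} → 𝕄 := fun q => matrixUnit q.2
  refine (Submodule.finrank_mono ?_).trans (finrank_range_le_card (R := k) w)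
  rintro _ ⟨b, rfl⟩
  -- `e_jj * b = ∑ q, e_jj * b * e_qq`, whose `q`-th term is `b j q • e_jq`, zero unless `B j q`
  rw [LinearMap.mulLeft_apply, ← mul_one (_ * b), ← sum_matrixUnit_diag, Finset.mul_sum]
  refine sum_mem fun q _ => ?_
  by_cases hjq : B j q
  · have : matrixUnit (hrefl j) * b * matrixUnit (hrefl q) =
        (b : Matrix (Fin n) (Fin n) k) j q • w ⟨q, hjq⟩ := Subtype.ext (by simp [w])
    rw [this]
    exact smul_mem _ _ (subset_span ⟨_, rfl⟩)
  · have : matrixUnit (hrefl j) * b * matrixUnit (hrefl q) = 0 :=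
      Subtype.ext (by simp [b.2 j q hjq])
    rw [this]
    exact zero_mem _

theorem symmetric_of_isFrobeniusAlgebra (hA : IsFrobeniusAlgebra k 𝕄) :
    ∀ i j, B i j → B j i := by
  classical
  by_contra hns
  obtain ⟨j, ⟨i, hij, hji⟩, hmax⟩ := exists_maximal_of_not_symmetric htrans hns
  have hcard : Fintype.card {q // B j q} < Fintype.card {i // B i j} :=
    Fintype.card_lt_of_injective_of_notMem (fun q => ⟨q.1, hmax q.1 q.2⟩)
      (fun _ _ h => Subtype.ext (by simpa using h)) (b := ⟨i, hij⟩) <| by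
        rintro ⟨q, hq⟩
        obtain rfl : q.1 = i := Subtype.ext_iff.1 hq
        exact hji q.2
  have := (card_le_finrank_range_mulRight j).trans <|
    (hA.finrank_range_mulRight_le (isIdempotentElem_matrixUnit_diag j)).trans
      (finrank_range_mulLeft_le_card j)
  omega

end structuralMatrixAlgebra

/-- If the structural matrix algebra `M(B, k)` is a Frobenius algebra,
then it is semisimple. -/
theorem statement5 (k : Type*) [Field k] {n : ℕ} (B : Fin n → Fin n → Prop)
    (hrefl : ∀ i, B i i) (htrans : ∀ i j l, B i j → B j l → B i l)
    (hFrob : IsFrobeniusAlgebra k (structuralMatrixAlgebra k B hrefl htrans)) :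
    IsSemisimpleRing (structuralMatrixAlgebra k B hrefl htrans) :=
  structuralMatrixAlgebra.isSemisimpleRing_of_symmetric
    (structuralMatrixAlgebra.symmetric_of_isFrobeniusAlgebra hFrob)
end

section
/- Let C = IC(X), x ∈ X, S_x = span{e_{x,y} : y ~ x}, and E_x = span{e_{x,y} : x ≤ y}. Then S_x is an essential C*-submodule of E_x: every nonzero C*-submodule of E_x intersects S_x nontrivially. In particular, for every nonzero z ∈ E_x there is c* ∈ C* with 0 ≠ c* → z ∈ S_x. -/
open TensorProduct

/-- The underlying vector space of the incidence coalgebra `IC(X)`: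
functions with finite support on the set of pairs `(x, y)` with `x ≤ y`. -/
abbrev IC (k X : Type*) [Field k] [Preorder X] : Type _ :=
  {p : X × X // p.1 ≤ p.2} →₀ k

/-- The basis element `e_{x,y}` of the incidence coalgebra. -/
noncomputable def e (k : Type*) {X : Type*} [Field k] [Preorder X] (x y : X) (h : x ≤ y) :
    IC k X :=
  Finsupp.single ⟨(x, y), h⟩ 1

/-- The comultiplication `Δ(e_{x,y}) = Σ_{x ≤ z ≤ y} e_{x,z} ⊗ e_{z,y}`. -/
noncomputable def Δ (k : Type*) {X : Type*} [Field k] [Preorder X] [LocallyFiniteOrder X] :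
    IC k X →ₗ[k] IC k X ⊗[k] IC k X :=
  Finsupp.lsum k fun p => LinearMap.toSpanSingleton k _
    (∑ z ∈ (Finset.Icc p.1.1 p.1.2).attach,
      e k p.1.1 z.1 (Finset.mem_Icc.mp z.2).1 ⊗ₜ[k] e k z.1 p.1.2 (Finset.mem_Icc.mp z.2).2)

open Classical in
/-- The counit `ε(e_{x,y}) = δ_{x,y}`. -/
noncomputable def ε (k : Type*) {X : Type*} [Field k] [Preorder X] : IC k X →ₗ[k] k :=
  Finsupp.lsum k fun p => LinearMap.toSpanSingleton k k (if p.1.1 = p.1.2 then 1 else 0)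

/-- The left action of `C* = Module.Dual k (IC k X)` on `C = IC k X` induced by the right
comodule structure: `c* → c = Σ c*(c₂) c₁`. -/
noncomputable def act (k : Type*) {X : Type*} [Field k] [Preorder X] [LocallyFiniteOrder X]
    (f : Module.Dual k (IC k X)) : IC k X →ₗ[k] IC k X :=
  (TensorProduct.rid k (IC k X)).toLinearMap ∘ₗ TensorProduct.map LinearMap.id f ∘ₗ Δ k

/-- The right action of `C*` on `C`: `c ← c* = Σ c*(c₁) c₂`. -/
noncomputable def actR (k : Type*) {X : Type*} [Field k] [Preorder X] [LocallyFiniteOrder X]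
    (f : Module.Dual k (IC k X)) : IC k X →ₗ[k] IC k X :=
  (TensorProduct.lid k (IC k X)).toLinearMap ∘ₗ TensorProduct.map f LinearMap.id ∘ₗ Δ k

/-- The dual basis functional `p_{x,y}`. -/
noncomputable def pfun (k : Type*) {X : Type*} [Field k] [Preorder X] (x y : X) (h : x ≤ y) :
    Module.Dual k (IC k X) :=
  Finsupp.lapply ⟨(x, y), h⟩

/-- `S_x`: the span of `{e_{x,y} : y ~ x}`. -/
noncomputable def Ssub (k : Type*) {X : Type*} [Field k] [Preorder X] (x : X) :
    Submodule k (IC k X) :=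
  Submodule.span k {c | ∃ (y : X) (h : x ≤ y), y ≤ x ∧ c = e k x y h}

/-- `E_x`: the span of `{e_{x,y} : x ≤ y}`. -/
noncomputable def Esub (k : Type*) {X : Type*} [Field k] [Preorder X] (x : X) :
    Submodule k (IC k X) :=
  Submodule.span k {c | ∃ (y : X) (h : x ≤ y), c = e k x y h}

/-!
Every `z ∈ E_x` is supported on pairs `(x, v)`, and the dual basis functional `p_{x,v}` acts on
`E_x` by `p_{x,v} → z = z(x,v) • e_{x,x}`: in `c* → e_{x,y} = Σ_{x ≤ w ≤ y} c*(e_{w,y}) e_{x,w}`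
only the term `w = x` survives. Choosing `(x, v)` in the support of a nonzero `z` therefore
sends `z` to a nonzero multiple of `e_{x,x} ∈ S_x`, and a `C*`-stable submodule containing `z`
contains that multiple.
-/

section IncidenceCoalgebra

variable (k : Type*) {X : Type*} [Field k] [Preorder X]

lemma pfun_e_of_fst_ne {u v a b : X} (huv : u ≤ v) (hab : a ≤ b) (hau : a ≠ u) :
    pfun k u v huv (e k a b hab) = 0 :=
  Finsupp.single_eq_of_ne fun h => hau (congrArg (fun p => p.1.1) h).symm

lemma e_ne_zero {x y : X} (h : x ≤ y) : e k x y h ≠ 0 :=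
  Finsupp.single_ne_zero.mpr one_ne_zero

lemma e_self_mem_Ssub (x : X) : e k x x le_rfl ∈ Ssub k x :=
  Submodule.subset_span ⟨x, le_rfl, le_rfl, rfl⟩

lemma fst_eq_of_mem_support_of_mem_Esub {x : X} {z : IC k X} (hz : z ∈ Esub k x)
    {p : {p : X × X // p.1 ≤ p.2}} (hp : p ∈ z.support) : p.1.1 = x := by
  have hEsub : Esub k x ≤ Finsupp.supported k k {q : {p : X × X // p.1 ≤ p.2} | q.1.1 = x} := by
    rw [Esub, Submodule.span_le]
    rintro c ⟨y, h, rfl⟩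
    exact Finsupp.single_mem_supported k 1 rfl
  exact hEsub hz hp

variable [LocallyFiniteOrder X]

lemma act_e (f : Module.Dual k (IC k X)) {x y : X} (h : x ≤ y) :
    act k f (e k x y h) = ∑ w ∈ (Finset.Icc x y).attach,
      f (e k w.1 y (Finset.mem_Icc.mp w.2).2) • e k x w.1 (Finset.mem_Icc.mp w.2).1 := by
  simp only [act, Δ, e, LinearMap.comp_apply, Finsupp.lsum_single,
    LinearMap.toSpanSingleton_apply, one_smul, map_sum]
  simp [TensorProduct.map_tmul, TensorProduct.rid_tmul]

lemma act_pfun_e {x v y : X} (hv : x ≤ v) (h : x ≤ y) :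
    act k (pfun k x v hv) (e k x y h) = pfun k x v hv (e k x y h) • e k x x le_rfl := by
  rw [act_e, Finset.sum_eq_single_of_mem ⟨x, Finset.mem_Icc.mpr ⟨le_rfl, h⟩⟩
    (Finset.mem_attach _ _)]
  intro w _ hwx
  rw [pfun_e_of_fst_ne k hv _ fun hw => hwx (Subtype.ext hw), zero_smul]

lemma act_pfun_of_mem_Esub {x v : X} (hv : x ≤ v) {z : IC k X} (hz : z ∈ Esub k x) :
    act k (pfun k x v hv) z = pfun k x v hv z • e k x x le_rfl := by
  refine LinearMap.eqOn_span (g := (pfun k x v hv).smulRight (e k x x le_rfl)) ?_ hz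
  rintro c ⟨y, h, rfl⟩
  exact act_pfun_e k hv h

theorem exists_act_mem_Ssub_ne_zero {x : X} {z : IC k X} (hz : z ∈ Esub k x) (hz0 : z ≠ 0) :
    ∃ f : Module.Dual k (IC k X), act k f z ∈ Ssub k x ∧ act k f z ≠ 0 := by
  obtain ⟨⟨⟨x', v⟩, hv⟩, hp⟩ := Finsupp.support_nonempty_iff.mpr hz0
  obtain rfl : x' = x := fst_eq_of_mem_support_of_mem_Esub k hz hp
  refine ⟨pfun k x' v hv, ?_, ?_⟩ <;> rw [act_pfun_of_mem_Esub k hv hz]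
  · exact Submodule.smul_mem _ _ (e_self_mem_Ssub k x')
  · exact smul_ne_zero (Finsupp.mem_support_iff.mp hp) (e_ne_zero k le_rfl)

theorem inf_Ssub_ne_bot {x : X} {N : Submodule k (IC k X)} (hNE : N ≤ Esub k x)
    (hstab : ∀ (f : Module.Dual k (IC k X)), ∀ c ∈ N, act k f c ∈ N) (hN0 : N ≠ ⊥) :
    N ⊓ Ssub k x ≠ ⊥ := by
  obtain ⟨z, hzN, hz0⟩ := Submodule.exists_mem_ne_zero_of_ne_bot hN0
  obtain ⟨f, hfS, hf0⟩ := exists_act_mem_Ssub_ne_zero k (hNE hzN) hz0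
  exact (Submodule.ne_bot_iff _).mpr ⟨act k f z, ⟨hstab f z hzN, hfS⟩, hf0⟩

end IncidenceCoalgebra

/-- `S_x` is an essential `C*`-submodule of `E_x`: every nonzero
`C*`-stable submodule of `E_x` meets `S_x` nontrivially. In particular, for every nonzero
`z ∈ E_x` there is `c* ∈ C*` with `0 ≠ c* → z ∈ S_x`. -/
theorem statement14 (k X : Type*) [Field k] [Preorder X] [LocallyFiniteOrder X] (x : X) :
    (∀ N : Submodule k (IC k X), N ≤ Esub k x →
      (∀ (f : Module.Dual k (IC k X)), ∀ c ∈ N, act k f c ∈ N) →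
      N ≠ ⊥ → N ⊓ Ssub k x ≠ ⊥) ∧
    (∀ z ∈ Esub k (X := X) x, z ≠ 0 →
      ∃ f : Module.Dual k (IC k X), act k f z ∈ Ssub k x ∧ act k f z ≠ 0) :=
  ⟨fun _ hNE hstab hN0 => inf_Ssub_ne_bot k hNE hstab hN0,
    fun _ hz hz0 => exists_act_mem_Ssub_ne_zero k hz hz0⟩
end
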